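/- arXiv:hep-th/9402054 — 2 statements merged into one kernel-verified Lean document; each statement's English description precedes it below -/
import Mathlib

section
/- Let g be a Lie algebra and R ∈ End(g) a linear operator satisfying the modified classical Yang–Baxter equation [RX,RY] − R([RX,Y] + [X,RY]) + [X,Y] = 0 for all X,Y ∈ g. Then the bracket [X,Y]_R = (1/2)[RX,Y] + (1/2)[X,RY] satisfies the Jacobi identity, so (g, [·,·]_R) is a Lie algebra. -/
/-- The R-bracket `[X,Y]_R = (1/2)[RX,Y] + (1/2)[X,RY]`. -/
noncomputable def rBracket {g : Type*} [LieRing g] [LieAlgebra ℝ g] (R : g →ₗ[ℝ] g) (X Y : g) : g :=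
  (1 / 2 : ℝ) • ⁅R X, Y⁆ + (1 / 2 : ℝ) • ⁅X, R Y⁆

/-- If `R` satisfies the modified classical Yang–Baxter equation, then the
R-bracket satisfies the Jacobi identity. -/
theorem rBracket_jacobi {g : Type*} [LieRing g] [LieAlgebra ℝ g] (R : g →ₗ[ℝ] g)
    (hR : ∀ X Y : g, ⁅R X, R Y⁆ - R (⁅R X, Y⁆ + ⁅X, R Y⁆) + ⁅X, Y⁆ = 0) :
    ∀ X Y Z : g,
      rBracket R X (rBracket R Y Z) + rBracket R Y (rBracket R Z X) +
        rBracket R Z (rBracket R X Y) = 0 := by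
  have key : ∀ A B : g, R (⁅R A, B⁆ + ⁅A, R B⁆) = ⁅R A, R B⁆ + ⁅A, B⁆ := by
    intro A B
    have h := hR A B
    linear_combination (norm := module) -h
  intro X Y Z
  simp only [rBracket, ← smul_add, map_smul, key]
  have j1 := lie_jacobi X Y Z
  have j2 := lie_jacobi (R X) (R Y) Z
  have j3 := lie_jacobi (R X) Y (R Z)
  have j4 := lie_jacobi X (R Y) (R Z)
  simp only [lie_add, add_lie, lie_smul, smul_lie, smul_add, smul_smul]
  linear_combination (norm := module)
    ((1 / 4 : ℝ)) • j1 + ((1 / 4 : ℝ)) • j2 + ((1 / 4 : ℝ)) • j3 + ((1 / 4 : ℝ)) • j4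
end

section
/- Let g be a Lie algebra and 𝓡 ∈ End(g ⊕ g) a solution of the modified CYBE on g ⊕ g with block form 𝓡 = (A, B; B*, D). Then A and D each satisfy the modified classical Yang–Baxter equation on g, and hence [·,·]_A := (1/2)([A·,·]+[·,A·]) and [·,·]_D are Lie brackets on g. -/
private lemma mCYBE_jacobi {g : Type*} [LieRing g] [LieAlgebra ℝ g]
    (A : g →ₗ[ℝ] g)
    (hA : ∀ u v : g, ⁅A u, A v⁆ - A (⁅A u, v⁆ + ⁅u, A v⁆) + ⁅u, v⁆ = 0) :
    ∀ X Y Z : g,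
      ((1 / 2 : ℝ) • ⁅A X, (1 / 2 : ℝ) • ⁅A Y, Z⁆ + (1 / 2 : ℝ) • ⁅Y, A Z⁆⁆ +
          (1 / 2 : ℝ) • ⁅X, A ((1 / 2 : ℝ) • ⁅A Y, Z⁆ + (1 / 2 : ℝ) • ⁅Y, A Z⁆)⁆) +
        ((1 / 2 : ℝ) • ⁅A Y, (1 / 2 : ℝ) • ⁅A Z, X⁆ + (1 / 2 : ℝ) • ⁅Z, A X⁆⁆ +
          (1 / 2 : ℝ) • ⁅Y, A ((1 / 2 : ℝ) • ⁅A Z, X⁆ + (1 / 2 : ℝ) • ⁅Z, A X⁆)⁆) +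
        ((1 / 2 : ℝ) • ⁅A Z, (1 / 2 : ℝ) • ⁅A X, Y⁆ + (1 / 2 : ℝ) • ⁅X, A Y⁆⁆ +
          (1 / 2 : ℝ) • ⁅Z, A ((1 / 2 : ℝ) • ⁅A X, Y⁆ + (1 / 2 : ℝ) • ⁅X, A Y⁆)⁆) = 0 := by
  have hA' : ∀ u v : g, A (⁅A u, v⁆ + ⁅u, A v⁆) = ⁅A u, A v⁆ + ⁅u, v⁆ := by
    intro u v
    have h := hA u v
    rw [eq_comm, ← sub_eq_zero, ← h]; abel
  have key : ∀ u v : g, A ((1 / 2 : ℝ) • ⁅A u, v⁆ + (1 / 2 : ℝ) • ⁅u, A v⁆)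
      = (1 / 2 : ℝ) • (⁅A u, A v⁆ + ⁅u, v⁆) := by
    intro u v
    rw [← smul_add, map_smul, hA']
  intro X Y Z
  rw [key, key, key]
  simp only [lie_add, lie_smul, smul_add, smul_smul]
  have j1 := lie_jacobi (A X) (A Y) Z
  have j2 := lie_jacobi (A X) Y (A Z)
  have j3 := lie_jacobi X (A Y) (A Z)
  have j4 := lie_jacobi X Y Z
  linear_combination (norm := module) ((1:ℝ)/4) • j1 + ((1:ℝ)/4) • j2 +
    ((1:ℝ)/4) • j3 + ((1:ℝ)/4) • j4

/-- If the block operator `𝓡(u,v) = (Au + Bv, B*u + Dv)` satisfies the modified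
CYBE on `g ⊕ g`, then `A` and `D` each satisfy the modified CYBE on `g`, and the
corresponding R-brackets `[X,Y]_A` and `[X,Y]_D` satisfy the Jacobi identity. -/
theorem block_diagonal_mCYBE {g : Type*} [LieRing g] [LieAlgebra ℝ g]
    (A B Bs D : g →ₗ[ℝ] g)
    (hR : ∀ X Y : g × g,
      ((⁅A X.1 + B X.2, A Y.1 + B Y.2⁆ : g), (⁅Bs X.1 + D X.2, Bs Y.1 + D Y.2⁆ : g)) -
        (A (⁅A X.1 + B X.2, Y.1⁆ + ⁅X.1, A Y.1 + B Y.2⁆) +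
            B (⁅Bs X.1 + D X.2, Y.2⁆ + ⁅X.2, Bs Y.1 + D Y.2⁆),
          Bs (⁅A X.1 + B X.2, Y.1⁆ + ⁅X.1, A Y.1 + B Y.2⁆) +
            D (⁅Bs X.1 + D X.2, Y.2⁆ + ⁅X.2, Bs Y.1 + D Y.2⁆)) +
        ((⁅X.1, Y.1⁆ : g), (⁅X.2, Y.2⁆ : g)) = 0) :
    (∀ u v : g, ⁅A u, A v⁆ - A (⁅A u, v⁆ + ⁅u, A v⁆) + ⁅u, v⁆ = 0) ∧
    (∀ u v : g, ⁅D u, D v⁆ - D (⁅D u, v⁆ + ⁅u, D v⁆) + ⁅u, v⁆ = 0) ∧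
    (∀ X Y Z : g,
      ((1 / 2 : ℝ) • ⁅A X, (1 / 2 : ℝ) • ⁅A Y, Z⁆ + (1 / 2 : ℝ) • ⁅Y, A Z⁆⁆ +
          (1 / 2 : ℝ) • ⁅X, A ((1 / 2 : ℝ) • ⁅A Y, Z⁆ + (1 / 2 : ℝ) • ⁅Y, A Z⁆)⁆) +
        ((1 / 2 : ℝ) • ⁅A Y, (1 / 2 : ℝ) • ⁅A Z, X⁆ + (1 / 2 : ℝ) • ⁅Z, A X⁆⁆ +
          (1 / 2 : ℝ) • ⁅Y, A ((1 / 2 : ℝ) • ⁅A Z, X⁆ + (1 / 2 : ℝ) • ⁅Z, A X⁆)⁆) +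
        ((1 / 2 : ℝ) • ⁅A Z, (1 / 2 : ℝ) • ⁅A X, Y⁆ + (1 / 2 : ℝ) • ⁅X, A Y⁆⁆ +
          (1 / 2 : ℝ) • ⁅Z, A ((1 / 2 : ℝ) • ⁅A X, Y⁆ + (1 / 2 : ℝ) • ⁅X, A Y⁆)⁆) = 0) ∧
    (∀ X Y Z : g,
      ((1 / 2 : ℝ) • ⁅D X, (1 / 2 : ℝ) • ⁅D Y, Z⁆ + (1 / 2 : ℝ) • ⁅Y, D Z⁆⁆ +
          (1 / 2 : ℝ) • ⁅X, D ((1 / 2 : ℝ) • ⁅D Y, Z⁆ + (1 / 2 : ℝ) • ⁅Y, D Z⁆)⁆) +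
        ((1 / 2 : ℝ) • ⁅D Y, (1 / 2 : ℝ) • ⁅D Z, X⁆ + (1 / 2 : ℝ) • ⁅Z, D X⁆⁆ +
          (1 / 2 : ℝ) • ⁅Y, D ((1 / 2 : ℝ) • ⁅D Z, X⁆ + (1 / 2 : ℝ) • ⁅Z, D X⁆)⁆) +
        ((1 / 2 : ℝ) • ⁅D Z, (1 / 2 : ℝ) • ⁅D X, Y⁆ + (1 / 2 : ℝ) • ⁅X, D Y⁆⁆ +
          (1 / 2 : ℝ) • ⁅Z, D ((1 / 2 : ℝ) • ⁅D X, Y⁆ + (1 / 2 : ℝ) • ⁅X, D Y⁆)⁆) = 0) := by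
  have hA : ∀ u v : g, ⁅A u, A v⁆ - A (⁅A u, v⁆ + ⁅u, A v⁆) + ⁅u, v⁆ = 0 := by
    intro u v
    have h := hR (u, 0) (v, 0)
    simp only [Prod.ext_iff] at h
    simpa [map_add] using h.1
  have hD : ∀ u v : g, ⁅D u, D v⁆ - D (⁅D u, v⁆ + ⁅u, D v⁆) + ⁅u, v⁆ = 0 := by
    intro u v
    have h := hR (0, u) (0, v)
    simp only [Prod.ext_iff] at h
    simpa [map_add] using h.2
  exact ⟨hA, hD, mCYBE_jacobi A hA, mCYBE_jacobi D hD⟩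
end
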